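/- arXiv:2604.21581 — 5 statements merged into one kernel-verified Lean document; each statement's English description precedes it below -/
import Mathlib

section
/- Let a = sqrt((l/2)·σ²·γ) > 0 and ξ = (α − b/2 − a)/(α − b/2 + a), with l, σ, γ > 0 and α − b/2 + a ≠ 0, and assume ξ·exp(−(2a/l)(T−t)) ≠ 1 for all t ∈ [0,T]. Then the function θ(t) = a·(1 + ξ·e^{−(2a/l)(T−t)})/(1 − ξ·e^{−(2a/l)(T−t)}) satisfies the Riccati equation θ'(t) = (θ(t)² − (l/2)σ²γ)/l on [0,T] with terminal condition θ(T) = α − b/2. -/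
/-- the function θ(t) = a(1+ξe^{-(2a/l)(T-t)})/(1-ξe^{-(2a/l)(T-t)})
solves the Riccati equation θ' = (θ² - (l/2)σ²γ)/l on [0,T] with θ(T) = α - b/2. -/
theorem stmt_0 (l σ γ α b T : ℝ) (hl : 0 < l) (hσ : 0 < σ) (hγ : 0 < γ) (hT : 0 < T)
    (a ξ : ℝ) (ha : a = Real.sqrt ((l / 2) * σ ^ 2 * γ)) (ha_pos : 0 < a)
    (hden : α - b / 2 + a ≠ 0) (hξ : ξ = (α - b / 2 - a) / (α - b / 2 + a))
    (hne : ∀ t ∈ Set.Icc (0 : ℝ) T, ξ * Real.exp (-(2 * a / l) * (T - t)) ≠ 1)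
    (θ : ℝ → ℝ)
    (hθ : ∀ t, θ t = a * (1 + ξ * Real.exp (-(2 * a / l) * (T - t))) /
      (1 - ξ * Real.exp (-(2 * a / l) * (T - t)))) :
    (∀ t ∈ Set.Icc (0 : ℝ) T,
        HasDerivAt θ ((θ t ^ 2 - (l / 2) * σ ^ 2 * γ) / l) t) ∧
      θ T = α - b / 2 := by
  have hl0 : l ≠ 0 := hl.ne'
  have ha2 : a ^ 2 = (l / 2) * σ ^ 2 * γ := by
    rw [ha, Real.sq_sqrt]
    positivity
  constructor
  · intro t ht
    set E : ℝ → ℝ := fun s => ξ * Real.exp (-(2 * a / l) * (T - s)) with hE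
    have h1 : 1 - E t ≠ 0 := by
      intro h
      exact hne t ht (sub_eq_zero.mp h).symm
    have hEd : HasDerivAt E ((2 * a / l) * E t) t := by
      have h0 : HasDerivAt (fun s : ℝ => -(2 * a / l) * (T - s)) (2 * a / l) t := by
        have := (hasDerivAt_id t).const_sub T
        have := this.const_mul (-(2 * a / l))
        simpa using this
      have := (h0.exp).const_mul ξ
      simpa [hE, mul_comm, mul_left_comm, mul_assoc] using this
    have hnum : HasDerivAt (fun s => a * (1 + E s)) (a * ((2 * a / l) * E t)) t := by
      have := ((hasDerivAt_const t (1:ℝ)).add hEd).const_mul a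
      simpa using this
    have hden' : HasDerivAt (fun s => 1 - E s) (-((2 * a / l) * E t)) t :=
      hEd.const_sub 1
    have hdiv : HasDerivAt (fun s => a * (1 + E s) / (1 - E s))
        ((a * (2 * a / l * E t) * (1 - E t) - a * (1 + E t) * -(2 * a / l * E t)) / (1 - E t) ^ 2) t :=
      hnum.div hden' h1
    have hθfun : θ = fun s => a * (1 + E s) / (1 - E s) := by
      funext s; exact hθ s
    rw [hθfun]
    convert hdiv using 1
    show ((a * (1 + E t) / (1 - E t)) ^ 2 - l / 2 * σ ^ 2 * γ) / l = _
    rw [← ha2]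
    field_simp
    ring
  · rw [hθ T]
    simp only [sub_self, mul_zero, neg_zero, Real.exp_zero, mul_one]
    have hξ1 : (1:ℝ) - ξ ≠ 0 := by
      rw [hξ, sub_ne_zero]
      intro h
      rw [eq_comm, div_eq_one_iff_eq hden] at h
      linarith
    rw [div_eq_iff hξ1]
    have h3 : ξ * (α - b / 2 + a) = α - b / 2 - a := by
      rw [hξ]; exact div_mul_cancel₀ _ hden
    linear_combination h3
end

section
/- Let a = sqrt((l/2)σ²γ), ξ = (α − b/2 − a)/(α − b/2 + a), and define h(t,q) = (a·(1 + ξ e^{−(2a/l)(T−t)})/(1 − ξ e^{−(2a/l)(T−t)}) + b/2)·(q − N)². Assuming the denominators are nonzero on [0,T], h satisfies the PDE −∂_t h(t,q) − (1/2)σ²γ(q−N)² + (b q − b N − ∂_q h(t,q))²/(4l) = 0 for all t ∈ [0,T], q ∈ ℝ, with terminal condition h(T,q) = α(q−N)². -/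
/-- the function h(t,q) = (θ(t)+b/2)(q-N)², with
θ(t) = a(1+ξe^{-(2a/l)(T-t)})/(1-ξe^{-(2a/l)(T-t)}), satisfies the reduced HJB
equation -∂_t h - (1/2)σ²γ(q-N)² + (bq - bN - ∂_q h)²/(4l) = 0 on [0,T]×ℝ, with
terminal condition h(T,q) = α(q-N)². -/
theorem stmt_1 (l σ γ α b N T : ℝ) (hl : 0 < l) (hσ : 0 < σ) (hγ : 0 < γ) (hT : 0 < T)
    (a ξ : ℝ) (ha : a = Real.sqrt ((l / 2) * σ ^ 2 * γ))
    (hden : α - b / 2 + a ≠ 0) (hξ : ξ = (α - b / 2 - a) / (α - b / 2 + a))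
    (hne : ∀ t ∈ Set.Icc (0 : ℝ) T, ξ * Real.exp (-(2 * a / l) * (T - t)) ≠ 1)
    (h : ℝ → ℝ → ℝ)
    (hh : ∀ t q, h t q =
      (a * (1 + ξ * Real.exp (-(2 * a / l) * (T - t))) /
          (1 - ξ * Real.exp (-(2 * a / l) * (T - t))) + b / 2) * (q - N) ^ 2) :
    (∀ t ∈ Set.Icc (0 : ℝ) T, ∀ q : ℝ,
        -(deriv (fun s => h s q) t) - (1 / 2) * σ ^ 2 * γ * (q - N) ^ 2 +
          (b * q - b * N - deriv (fun p => h t p) q) ^ 2 / (4 * l) = 0) ∧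
      ∀ q : ℝ, h T q = α * (q - N) ^ 2 := by
  have hrad : 0 ≤ (l / 2) * σ ^ 2 * γ := by positivity
  have ha2 : a ^ 2 = (l / 2) * σ ^ 2 * γ := by
    rw [ha, sq, Real.mul_self_sqrt hrad]
  have hσγ : (1 / 2) * σ ^ 2 * γ = a ^ 2 / l := by
    rw [ha2]; field_simp
  have hξ1 : ξ ≠ 1 := by
    have := hne T ⟨le_of_lt hT, le_refl T⟩
    simpa using this
  constructor
  · intro t ht q
    obtain ⟨E, hE⟩ : ∃ E : ℝ, Real.exp (-(2 * a / l) * (T - t)) = E := ⟨_, rfl⟩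
    have hD0 : 1 - ξ * Real.exp (-(2 * a / l) * (T - t)) ≠ 0 :=
      sub_ne_zero.mpr (Ne.symm (hne t ht))
    have hD' : 1 - ξ * E ≠ 0 := hE ▸ hD0
    -- derivative in q
    have hq : deriv (fun p => h t p) q
        = (a * (1 + ξ * E) / (1 - ξ * E) + b / 2) * (2 * (q - N)) := by
      have hfun : (fun p => h t p)
          = fun p => (a * (1 + ξ * E) / (1 - ξ * E) + b / 2) * (p - N) ^ 2 :=
        funext fun p => by rw [hh t p, hE]
      rw [hfun]
      have h1 : HasDerivAt (fun p : ℝ => (p - N) ^ 2) (2 * (q - N) ^ 1 * 1) q := by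
        simpa using (((hasDerivAt_id q).sub_const N).fun_pow 2)
      rw [(h1.const_mul (a * (1 + ξ * E) / (1 - ξ * E) + b / 2)).deriv]
      ring
    -- derivative in t
    have h1 : HasDerivAt (fun s : ℝ => T - s) (0 - 1) t :=
      (hasDerivAt_const t T).sub (hasDerivAt_id t)
    have h2 := h1.const_mul (-(2 * a / l))
    have h2' : HasDerivAt (fun s : ℝ => -(2 * a / l) * (T - s))
        (-(2 * a / l) * (0 - 1)) t := h2
    have h3 := h2'.exp
    have h4 := h3.const_mul ξ
    have h5 := (hasDerivAt_const t (1 : ℝ)).add h4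
    have h6 := h5.const_mul a
    have h7 := (hasDerivAt_const t (1 : ℝ)).sub h4
    have h8 := h6.div h7 hD0
    have h9 := (h8.add_const (b / 2)).mul_const ((q - N) ^ 2)
    have hfun : (fun s => h s q)
        = fun s => (a * (1 + ξ * Real.exp (-(2 * a / l) * (T - s))) /
            (1 - ξ * Real.exp (-(2 * a / l) * (T - s))) + b / 2) * (q - N) ^ 2 :=
      funext fun s => hh s q
    have h9' : HasDerivAt (fun s => (a * (1 + ξ * Real.exp (-(2 * a / l) * (T - s))) /
            (1 - ξ * Real.exp (-(2 * a / l) * (T - s))) + b / 2) * (q - N) ^ 2) _ t := h9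
    rw [hq, hfun, h9'.deriv, hσγ, hE]
    have hl' : l ≠ 0 := ne_of_gt hl
    simp only [Pi.add_apply, Pi.sub_apply, hE]
    field_simp [hD', hl']
    ring
  · intro q
    have ha0 : a ≠ 0 := by
      intro h0
      apply hξ1
      rw [hξ, h0]
      have h2 : α - b / 2 ≠ 0 := by simpa [h0] using hden
      field_simp
      rw [mul_zero, sub_zero, add_zero]
      exact div_self (by intro hc; exact h2 (by linarith))
    rw [hh T q]
    simp only [sub_self, mul_zero, neg_zero, zero_mul, Real.exp_zero, mul_one]
    have key : a * (1 + ξ) / (1 - ξ) + b / 2 = α := by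
      have h1ξ : 1 - ξ ≠ 0 := sub_ne_zero.mpr (Ne.symm hξ1)
      have hden2 : α * 2 - b + a * 2 ≠ 0 := fun hc => hden (by linarith)
      have hden3 : a * α * 8 - a * b * 4 + a ^ 2 * 8 ≠ 0 := by
        intro hc
        exact mul_ne_zero ha0 hden2 (by linear_combination hc / 4)
      have e1 : 1 - ξ = 2 * a / (α - b / 2 + a) := by
        rw [hξ]; rw [eq_div_iff hden, sub_mul, div_mul_cancel₀ _ hden]; ring
      have e2 : 1 + ξ = 2 * (α - b / 2) / (α - b / 2 + a) := by
        rw [hξ]; rw [eq_div_iff hden, add_mul, div_mul_cancel₀ _ hden]; ring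
      rw [e1, e2]
      have hden4 : 2 * α - b + a * 2 ≠ 0 := fun hc => hden (by linarith)
      field_simp [hden2, hden3, ha0, hden4]
      ring
    rw [key]
end

section
/- Let P(t,q,S) be twice differentiable, γ > 0, r ∈ ℝ, T > 0, and define J(t,x,q,S) = −exp(−γ e^{r(T−t)}(x + qS − P(t,q,S))). Then J satisfies (in the classical sense) ∂_t J + μ∂_S J + (1/2)σ²∂_{SS}J + sup_{|v|≤C}{ bv∂_S J + (rx − (S+lv)v)∂_x J + v∂_q J } = 0 if and only if P satisfies −∂_t P + rP + (μ − rS)q − μ∂_S P − (1/2)σ²∂_{SS}P − (1/2)σ²γe^{r(T−t)}(q − ∂_S P)² + sup_{|v|≤C}{ −lv² + (bq − b∂_S P − ∂_q P)v } = 0. -/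
private lemma expDeriv' {u : ℝ → ℝ} {u' t : ℝ} (hu : HasDerivAt u u' t) :
    HasDerivAt (fun s => -Real.exp (-(u s))) (u' * Real.exp (-(u t))) t := by
  have h : HasDerivAt (fun s => -Real.exp (-(u s))) (-(Real.exp (-(u t)) * -u')) t :=
    (hu.neg.exp).neg
  convert h using 1; ring

private lemma add_iSup_aux {ι : Sort*} [Nonempty ι] (a : ℝ) (f : ι → ℝ)
    (hf : BddAbove (Set.range f)) : (⨆ i, a + f i) = a + ⨆ i, f i :=
  (Monotone.map_ciSup_of_continuousAt (f := fun x : ℝ => a + x)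
    (continuousAt_const.add continuousAt_id) (fun _ _ h => by simpa using h) hf).symm

/-- change of variables from the value function J to the
indifference fee P.  With J(t,x,q,S) = -exp(-γe^{r(T-t)}(x+qS-P(t,q,S))) and P
twice differentiable, J satisfies the HJB equation
∂_t J + μ∂_S J + (1/2)σ²∂_{SS}J
  + sup_{|v|≤C}{bv∂_S J + (rx-(S+lv)v)∂_x J + v∂_q J} = 0
at every point iff P satisfies
-∂_t P + rP + (μ-rS)q - μ∂_S P - (1/2)σ²∂_{SS}P - (1/2)σ²γe^{r(T-t)}(q-∂_S P)²
  + sup_{|v|≤C}{-lv² + (bq - b∂_S P - ∂_q P)v} = 0 at every point. -/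
theorem stmt_9 (μ r b σ l γ C T : ℝ)
    (hσ : 0 < σ) (hl : 0 < l) (hγ : 0 < γ) (hC : 0 < C) (hT : 0 < T)
    (P : ℝ → ℝ → ℝ → ℝ)
    (hP : ContDiff ℝ 2 (fun p : ℝ × ℝ × ℝ => P p.1 p.2.1 p.2.2))
    (J : ℝ → ℝ → ℝ → ℝ → ℝ)
    (hJ : ∀ t x q S, J t x q S =
      -Real.exp (-(γ * Real.exp (r * (T - t)) * (x + q * S - P t q S)))) :
    (∀ t x q S : ℝ,
        deriv (fun s => J s x q S) t + μ * deriv (fun S' => J t x q S') S +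
          (1 / 2) * σ ^ 2 * iteratedDeriv 2 (fun S' => J t x q S') S +
          (⨆ v : Set.Icc (-C) C,
            (b * (v : ℝ) * deriv (fun S' => J t x q S') S +
              (r * x - (S + l * (v : ℝ)) * (v : ℝ)) *
                deriv (fun x' => J t x' q S) x +
              (v : ℝ) * deriv (fun q' => J t x q' S) q)) = 0) ↔
      (∀ t q S : ℝ,
        -(deriv (fun s => P s q S) t) + r * P t q S + (μ - r * S) * q -
          μ * deriv (fun S' => P t q S') S -
          (1 / 2) * σ ^ 2 * iteratedDeriv 2 (fun S' => P t q S') S -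
          (1 / 2) * σ ^ 2 * γ * Real.exp (r * (T - t)) *
            (q - deriv (fun S' => P t q S') S) ^ 2 +
          (⨆ v : Set.Icc (-C) C,
            (-(l * (v : ℝ) ^ 2) +
              (b * q - b * deriv (fun S' => P t q S') S -
                deriv (fun q' => P t q' S) q) * (v : ℝ))) = 0) := by
  haveI : Nonempty (Set.Icc (-C) C) :=
    ((Set.nonempty_Icc (a := -C) (b := C)).mpr (by linarith)).to_subtype
  -- slices of P are C²
  have hsliceT : ∀ q S : ℝ, ContDiff ℝ 2 (fun s : ℝ => P s q S) := fun q S =>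
    hP.comp (contDiff_id.prodMk (contDiff_const.prodMk contDiff_const))
  have hsliceQ : ∀ t S : ℝ, ContDiff ℝ 2 (fun q' : ℝ => P t q' S) := fun t S =>
    hP.comp (contDiff_const.prodMk (contDiff_id.prodMk contDiff_const))
  have hsliceS : ∀ t q : ℝ, ContDiff ℝ 2 (fun s : ℝ => P t q s) := fun t q =>
    hP.comp (contDiff_const.prodMk (contDiff_const.prodMk contDiff_id))
  have hdiff2 : ∀ f : ℝ → ℝ, ContDiff ℝ 2 f → Differentiable ℝ f := fun f hf =>
    hf.differentiable (by norm_num)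
  have hderiv1 : ∀ f : ℝ → ℝ, ContDiff ℝ 2 f → Differentiable ℝ (deriv f) := by
    intro f hf
    have h : ContDiff ℝ ((1 : ℕ) + 1) f := by exact_mod_cast hf
    exact ((contDiff_succ_iff_deriv.mp h).2.2).differentiable (by norm_num)
  -- the key pointwise identity
  have key : ∀ t x q S : ℝ,
      deriv (fun s => J s x q S) t + μ * deriv (fun S' => J t x q S') S +
        (1 / 2) * σ ^ 2 * iteratedDeriv 2 (fun S' => J t x q S') S +
        (⨆ v : Set.Icc (-C) C,
          (b * (v : ℝ) * deriv (fun S' => J t x q S') S +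
            (r * x - (S + l * (v : ℝ)) * (v : ℝ)) *
              deriv (fun x' => J t x' q S) x +
            (v : ℝ) * deriv (fun q' => J t x q' S) q)) =
      (γ * Real.exp (r * (T - t)) *
          Real.exp (-(γ * Real.exp (r * (T - t)) * (x + q * S - P t q S)))) *
        (-(deriv (fun s => P s q S) t) + r * P t q S + (μ - r * S) * q -
          μ * deriv (fun S' => P t q S') S -
          (1 / 2) * σ ^ 2 * iteratedDeriv 2 (fun S' => P t q S') S -
          (1 / 2) * σ ^ 2 * γ * Real.exp (r * (T - t)) *
            (q - deriv (fun S' => P t q S') S) ^ 2 +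
          (⨆ v : Set.Icc (-C) C,
            (-(l * (v : ℝ) ^ 2) +
              (b * q - b * deriv (fun S' => P t q S') S -
                deriv (fun q' => P t q' S) q) * (v : ℝ)))) := by
    intro t x q S
    have hEpos : (0 : ℝ) <
        Real.exp (-(γ * Real.exp (r * (T - t)) * (x + q * S - P t q S))) := Real.exp_pos _
    -- D1 : time derivative
    have hu1 : HasDerivAt
        (fun s => γ * Real.exp (r * (T - s)) * (x + q * S - P s q S))
        ((γ * (Real.exp (r * (T - t)) * (r * (0 - 1)))) * (x + q * S - P t q S) +
          (γ * Real.exp (r * (T - t))) * (0 - deriv (fun s => P s q S) t)) t := by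
      have ha : HasDerivAt (fun s => γ * Real.exp (r * (T - s)))
          (γ * (Real.exp (r * (T - t)) * (r * (0 - 1)))) t :=
        ((((hasDerivAt_const t T).sub (hasDerivAt_id t)).const_mul r).exp).const_mul γ
      have hb : HasDerivAt (fun s => x + q * S - P s q S)
          (0 - deriv (fun s => P s q S) t) t :=
        (hasDerivAt_const t (x + q * S)).sub ((hdiff2 _ (hsliceT q S) t).hasDerivAt)
      exact ha.mul hb
    have D1 : deriv (fun s => J s x q S) t =
        ((γ * (Real.exp (r * (T - t)) * (r * (0 - 1)))) * (x + q * S - P t q S) +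
          (γ * Real.exp (r * (T - t))) * (0 - deriv (fun s => P s q S) t)) *
          Real.exp (-(γ * Real.exp (r * (T - t)) * (x + q * S - P t q S))) := by
      have h1 : (fun s => J s x q S) =
          fun s => -Real.exp (-(γ * Real.exp (r * (T - s)) * (x + q * S - P s q S))) :=
        funext fun s => hJ s x q S
      rw [h1]; exact (expDeriv' hu1).deriv
    -- D2 : x derivative
    have hu2 : HasDerivAt
        (fun x' => γ * Real.exp (r * (T - t)) * (x' + q * S - P t q S))
        (γ * Real.exp (r * (T - t)) * 1) x :=
      (((hasDerivAt_id x).add_const (q * S)).sub_const (P t q S)).const_mul _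
    have D2 : deriv (fun x' => J t x' q S) x =
        (γ * Real.exp (r * (T - t)) * 1) *
          Real.exp (-(γ * Real.exp (r * (T - t)) * (x + q * S - P t q S))) := by
      have h2 : (fun x' => J t x' q S) =
          fun x' => -Real.exp (-(γ * Real.exp (r * (T - t)) * (x' + q * S - P t q S))) :=
        funext fun x' => hJ t x' q S
      rw [h2]; exact (expDeriv' hu2).deriv
    -- D3 : q derivative
    have hu3 : HasDerivAt
        (fun q' => γ * Real.exp (r * (T - t)) * (x + q' * S - P t q' S))
        (γ * Real.exp (r * (T - t)) *
          ((0 + 1 * S) - deriv (fun q' => P t q' S) q)) q :=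
      (((hasDerivAt_const q x).add ((hasDerivAt_id q).mul_const S)).sub
        ((hdiff2 _ (hsliceQ t S) q).hasDerivAt)).const_mul _
    have D3 : deriv (fun q' => J t x q' S) q =
        (γ * Real.exp (r * (T - t)) *
          ((0 + 1 * S) - deriv (fun q' => P t q' S) q)) *
          Real.exp (-(γ * Real.exp (r * (T - t)) * (x + q * S - P t q S))) := by
      have h3 : (fun q' => J t x q' S) =
          fun q' => -Real.exp (-(γ * Real.exp (r * (T - t)) * (x + q' * S - P t q' S))) :=
        funext fun q' => hJ t x q' S
      rw [h3]; exact (expDeriv' hu3).deriv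
    -- S derivative, as a function
    have hu4 : ∀ s₀ : ℝ, HasDerivAt
        (fun s => γ * Real.exp (r * (T - t)) * (x + q * s - P t q s))
        (γ * Real.exp (r * (T - t)) *
          ((0 + q * 1) - deriv (fun s => P t q s) s₀)) s₀ := fun s₀ =>
      (((hasDerivAt_const s₀ x).add ((hasDerivAt_id s₀).const_mul q)).sub
        ((hdiff2 _ (hsliceS t q) s₀).hasDerivAt)).const_mul _
    have hDfun : deriv (fun S' => J t x q S') =
        fun s₀ => (γ * Real.exp (r * (T - t)) *
            ((0 + q * 1) - deriv (fun s => P t q s) s₀)) *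
          Real.exp (-(γ * Real.exp (r * (T - t)) * (x + q * s₀ - P t q s₀))) := by
      funext s₀
      have h4 : (fun S' => J t x q S') =
          fun s => -Real.exp (-(γ * Real.exp (r * (T - t)) * (x + q * s - P t q s))) :=
        funext fun s => hJ t x q s
      rw [h4]; exact (expDeriv' (hu4 s₀)).deriv
    have D4 : deriv (fun S' => J t x q S') S =
        (γ * Real.exp (r * (T - t)) *
          ((0 + q * 1) - deriv (fun S' => P t q S') S)) *
          Real.exp (-(γ * Real.exp (r * (T - t)) * (x + q * S - P t q S))) := by
      rw [hDfun]
    -- D5 : second S derivative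
    have D5 : iteratedDeriv 2 (fun S' => J t x q S') S =
        (γ * Real.exp (r * (T - t)) *
            (0 - deriv (deriv (fun S' => P t q S')) S)) *
          Real.exp (-(γ * Real.exp (r * (T - t)) * (x + q * S - P t q S))) +
        (γ * Real.exp (r * (T - t)) *
            ((0 + q * 1) - deriv (fun S' => P t q S') S)) *
          (Real.exp (-(γ * Real.exp (r * (T - t)) * (x + q * S - P t q S))) *
            (-(γ * Real.exp (r * (T - t)) *
              ((0 + q * 1) - deriv (fun S' => P t q S') S)))) := by
      rw [show (2 : ℕ) = 1 + 1 from rfl, iteratedDeriv_succ, iteratedDeriv_one, hDfun]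
      have hG1 : HasDerivAt
          (fun s₀ => γ * Real.exp (r * (T - t)) *
            ((0 + q * 1) - deriv (fun s => P t q s) s₀))
          (γ * Real.exp (r * (T - t)) *
            (0 - deriv (deriv (fun s => P t q s)) S)) S :=
        ((hasDerivAt_const S (0 + q * 1)).sub
          ((hderiv1 _ (hsliceS t q) S).hasDerivAt)).const_mul _
      have hG2 : HasDerivAt
          (fun s₀ => Real.exp (-(γ * Real.exp (r * (T - t)) * (x + q * s₀ - P t q s₀))))
          (Real.exp (-(γ * Real.exp (r * (T - t)) * (x + q * S - P t q S))) *
            (-(γ * Real.exp (r * (T - t)) *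
              ((0 + q * 1) - deriv (fun s => P t q s) S)))) S :=
        ((hu4 S).neg).exp
      exact (hG1.mul hG2).deriv
    have hPSS : iteratedDeriv 2 (fun S' => P t q S') S =
        deriv (deriv (fun S' => P t q S')) S := by
      rw [show (2 : ℕ) = 1 + 1 from rfl, iteratedDeriv_succ, iteratedDeriv_one]
    -- the supremum identity
    set c : ℝ := γ * Real.exp (r * (T - t)) *
        Real.exp (-(γ * Real.exp (r * (T - t)) * (x + q * S - P t q S))) with hc
    have hcpos : 0 < c := by rw [hc]; positivity
    have hgcont : Continuous (fun v : Set.Icc (-C) C =>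
        c * (-(l * (v : ℝ) ^ 2) +
          (b * q - b * deriv (fun S' => P t q S') S -
            deriv (fun q' => P t q' S) q) * (v : ℝ))) := by fun_prop
    have hbdd : BddAbove (Set.range (fun v : Set.Icc (-C) C =>
        c * (-(l * (v : ℝ) ^ 2) +
          (b * q - b * deriv (fun S' => P t q S') S -
            deriv (fun q' => P t q' S) q) * (v : ℝ)))) :=
      (isCompact_range hgcont).bddAbove
    have hsup : (⨆ v : Set.Icc (-C) C,
          (b * (v : ℝ) * deriv (fun S' => J t x q S') S +
            (r * x - (S + l * (v : ℝ)) * (v : ℝ)) *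
              deriv (fun x' => J t x' q S) x +
            (v : ℝ) * deriv (fun q' => J t x q' S) q)) =
        c * (r * x) + c * (⨆ v : Set.Icc (-C) C,
          (-(l * (v : ℝ) ^ 2) +
            (b * q - b * deriv (fun S' => P t q S') S -
              deriv (fun q' => P t q' S) q) * (v : ℝ))) := by
      have step1 : (⨆ v : Set.Icc (-C) C,
            (b * (v : ℝ) * deriv (fun S' => J t x q S') S +
              (r * x - (S + l * (v : ℝ)) * (v : ℝ)) *
                deriv (fun x' => J t x' q S) x +
              (v : ℝ) * deriv (fun q' => J t x q' S) q)) =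
          ⨆ v : Set.Icc (-C) C, (c * (r * x) +
            c * (-(l * (v : ℝ) ^ 2) +
              (b * q - b * deriv (fun S' => P t q S') S -
                deriv (fun q' => P t q' S) q) * (v : ℝ))) := by
        refine iSup_congr fun v => ?_
        rw [D2, D3, D4, hc]; ring
      rw [step1, add_iSup_aux _ _ hbdd, ← Real.mul_iSup_of_nonneg hcpos.le]
    rw [hsup, D1, D4, D5, hPSS, hc]
    ring
  constructor
  · intro h t q S
    have h0 := h t 0 q S
    rw [key t 0 q S] at h0
    have hcpos : (0 : ℝ) < γ * Real.exp (r * (T - t)) *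
        Real.exp (-(γ * Real.exp (r * (T - t)) * (0 + q * S - P t q S))) := by positivity
    rcases mul_eq_zero.mp h0 with h' | h'
    · exact absurd h' hcpos.ne'
    · exact h'
  · intro h t x q S
    rw [key t x q S, h t q S, mul_zero]
end

section
/- Define P(t,q,S,A) = N·(t/T)·(S − A) + U(t,q,S) where U is twice differentiable. Then P satisfies the TWAP indifference-fee PDE −∂_t P − ((S−A)/t)∂_A P + (with r = 0) μq − μ∂_S P − (1/2)σ²∂_{SS}P − (1/2)σ²γ(q − ∂_S P)² + sup_{|v|≤C}{−lv² + (bq − b∂_S P − ∂_q P)v} = 0 with terminal condition P(T,q,S,A) = −N(A−S) + L(q), if and only if U satisfies the A-independent PDE −∂_t U + μq − μ(N t/T + ∂_S U) − (1/2)σ²∂_{SS}U − (1/2)σ²γ(q − Nt/T − ∂_S U)² + sup_{|v|≤C}{−lv² + (bq − b(Nt/T + ∂_S U) − ∂_q U)v} = 0 with U(T,q,S) = L(q). -/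
/-- TWAP transformation.  With r = 0 and
P(t,q,S,A) = N(t/T)(S-A) + U(t,q,S), the fee P satisfies the TWAP
indifference-fee PDE (including the averaging term -((S-A)/t)∂_A P) on (0,T]
with terminal condition P(T,q,S,A) = -N(A-S) + L(q), iff U satisfies the
A-independent PDE with U(T,q,S) = L(q). -/
theorem stmt_13 (μ b σ γ l C N T : ℝ)
    (hσ : 0 < σ) (hγ : 0 < γ) (hl : 0 < l) (hC : 0 < C) (hN : 0 < N) (hT : 0 < T)
    (L : ℝ → ℝ) (U : ℝ → ℝ → ℝ → ℝ)
    (hU : ContDiff ℝ 2 (fun p : ℝ × ℝ × ℝ => U p.1 p.2.1 p.2.2))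
    (P : ℝ → ℝ → ℝ → ℝ → ℝ)
    (hP : ∀ t q S A, P t q S A = N * (t / T) * (S - A) + U t q S) :
    ((∀ t ∈ Set.Ioc (0 : ℝ) T, ∀ q S A : ℝ,
        -(deriv (fun s => P s q S A) t) -
          ((S - A) / t) * deriv (fun A' => P t q S A') A + μ * q -
          μ * deriv (fun S' => P t q S' A) S -
          (1 / 2) * σ ^ 2 * iteratedDeriv 2 (fun S' => P t q S' A) S -
          (1 / 2) * σ ^ 2 * γ * (q - deriv (fun S' => P t q S' A) S) ^ 2 +
          (⨆ v : Set.Icc (-C) C,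
            (-(l * (v : ℝ) ^ 2) +
              (b * q - b * deriv (fun S' => P t q S' A) S -
                deriv (fun q' => P t q' S A) q) * (v : ℝ))) = 0) ∧
      (∀ q S A : ℝ, P T q S A = -(N * (A - S)) + L q)) ↔
    ((∀ t ∈ Set.Ioc (0 : ℝ) T, ∀ q S : ℝ,
        -(deriv (fun s => U s q S) t) + μ * q -
          μ * (N * (t / T) + deriv (fun S' => U t q S') S) -
          (1 / 2) * σ ^ 2 * iteratedDeriv 2 (fun S' => U t q S') S -
          (1 / 2) * σ ^ 2 * γ *
            (q - N * (t / T) - deriv (fun S' => U t q S') S) ^ 2 +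
          (⨆ v : Set.Icc (-C) C,
            (-(l * (v : ℝ) ^ 2) +
              (b * q - b * (N * (t / T) + deriv (fun S' => U t q S') S) -
                deriv (fun q' => U t q' S) q) * (v : ℝ))) = 0) ∧
      ∀ q S : ℝ, U T q S = L q) := by
  have hT' : T ≠ 0 := ne_of_gt hT
  have hUd : Differentiable ℝ (fun p : ℝ × ℝ × ℝ => U p.1 p.2.1 p.2.2) :=
    hU.differentiable two_ne_zero
  have hUt : ∀ t q S : ℝ, DifferentiableAt ℝ (fun s => U s q S) t := by
    intro t q S
    have : Differentiable ℝ ((fun p : ℝ × ℝ × ℝ => U p.1 p.2.1 p.2.2) ∘ (fun s : ℝ => (s, q, S))) :=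
      hUd.comp (by fun_prop)
    exact this t
  have hUq : ∀ t q S : ℝ, DifferentiableAt ℝ (fun q' => U t q' S) q := by
    intro t q S
    have : Differentiable ℝ ((fun p : ℝ × ℝ × ℝ => U p.1 p.2.1 p.2.2) ∘ (fun q' : ℝ => (t, q', S))) :=
      hUd.comp (by fun_prop)
    exact this q
  have hUS : ∀ t q S : ℝ, DifferentiableAt ℝ (fun S' => U t q S') S := by
    intro t q S
    have : Differentiable ℝ ((fun p : ℝ × ℝ × ℝ => U p.1 p.2.1 p.2.2) ∘ (fun S' : ℝ => (t, q, S'))) :=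
      hUd.comp (by fun_prop)
    exact this S
  -- derivatives of P
  have e1 : ∀ t q S A : ℝ, deriv (fun s => P s q S A) t
      = N * (1 / T) * (S - A) + deriv (fun s => U s q S) t := by
    intro t q S A
    simp only [hP]
    exact ((((hasDerivAt_id t).div_const T).const_mul N).mul_const (S - A)).add
      (hUt t q S).hasDerivAt |>.deriv
  have e2 : ∀ t q S A : ℝ, deriv (fun A' => P t q S A') A = N * (t / T) * (-1) := by
    intro t q S A
    simp only [hP]
    exact ((((hasDerivAt_id A).const_sub S).const_mul (N * (t / T))).add_const
      (U t q S)).deriv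
  have e3 : ∀ t q S A : ℝ, deriv (fun S' => P t q S' A) S
      = N * (t / T) + deriv (fun S' => U t q S') S := by
    intro t q S A
    simp only [hP]
    have h := ((((hasDerivAt_id S).sub_const A).const_mul (N * (t / T))).add
      (hUS t q S).hasDerivAt)
    simpa [Pi.add_def] using h.deriv
  have e4 : ∀ t q S A : ℝ, deriv (fun q' => P t q' S A) q
      = deriv (fun q' => U t q' S) q := by
    intro t q S A
    simp only [hP]
    exact deriv_const_add _
  have e5 : ∀ t q S A : ℝ, iteratedDeriv 2 (fun S' => P t q S' A) S
      = iteratedDeriv 2 (fun S' => U t q S') S := by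
    intro t q S A
    have hfun : deriv (fun S' => P t q S' A)
        = fun S' => N * (t / T) + deriv (fun x => U t q x) S' := by
      funext x
      exact e3 t q x A
    rw [iteratedDeriv_succ, iteratedDeriv_one, hfun,
      iteratedDeriv_succ, iteratedDeriv_one, deriv_const_add]
  -- the key pointwise identity between the two PDE left-hand sides
  have key : ∀ t : ℝ, t ≠ 0 → ∀ q S A : ℝ,
      (-(deriv (fun s => P s q S A) t) -
          ((S - A) / t) * deriv (fun A' => P t q S A') A + μ * q -
          μ * deriv (fun S' => P t q S' A) S -
          (1 / 2) * σ ^ 2 * iteratedDeriv 2 (fun S' => P t q S' A) S -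
          (1 / 2) * σ ^ 2 * γ * (q - deriv (fun S' => P t q S' A) S) ^ 2 +
          (⨆ v : Set.Icc (-C) C,
            (-(l * (v : ℝ) ^ 2) +
              (b * q - b * deriv (fun S' => P t q S' A) S -
                deriv (fun q' => P t q' S A) q) * (v : ℝ))))
      = (-(deriv (fun s => U s q S) t) + μ * q -
          μ * (N * (t / T) + deriv (fun S' => U t q S') S) -
          (1 / 2) * σ ^ 2 * iteratedDeriv 2 (fun S' => U t q S') S -
          (1 / 2) * σ ^ 2 * γ *
            (q - N * (t / T) - deriv (fun S' => U t q S') S) ^ 2 +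
          (⨆ v : Set.Icc (-C) C,
            (-(l * (v : ℝ) ^ 2) +
              (b * q - b * (N * (t / T) + deriv (fun S' => U t q S') S) -
                deriv (fun q' => U t q' S) q) * (v : ℝ)))) := by
    intro t ht q S A
    rw [e1, e2, e3, e4, e5]
    congr 1
    field_simp
    ring
  constructor
  · rintro ⟨hpde, hterm⟩
    constructor
    · intro t ht q S
      rw [← key t (ne_of_gt ht.1) q S 0]
      exact hpde t ht q S 0
    · intro q S
      have h := hterm q S S
      rw [hP] at h
      simpa using h
  · rintro ⟨hpde, hterm⟩
    constructor
    · intro t ht q S A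
      rw [key t (ne_of_gt ht.1) q S A]
      exact hpde t ht q S
    · intro q S A
      rw [hP, hterm, div_self hT']
      ring
end

section
/- With μ = r = 0, the optimal trading speed for the physical delivery contract is v₁*(t,q) = min{C, max{−C, (b(q−N) − ∂_q h(t,q))/(2l)}} = min{C, max{−C, −(θ(t)/l)·(q−N)}} where ∂_q h(t,q) = 2(θ(t)+b/2)(q−N) and θ(t) = a(1+ξe^{−(2a/l)(T−t)})/(1−ξe^{−(2a/l)(T−t)}). In particular, under the conditions θ(t) > 0 for all t (e.g., α > b/2 ≥ 0), the unconstrained optimal speed has the sign of N − q: the broker buys when q < N and sells when q > N, and never changes the side of the market along the deterministic optimal inventory trajectory, since the ODE q'(t) = −(θ(t)/l)(q(t)−N) preserves the sign of q(t) − N. -/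
open Set

lemma my_zero_fwd (c d K : ℝ) (f f' : ℝ → ℝ)
    (hf : ∀ t ∈ Icc c d, HasDerivAt f (f' t) t)
    (hb : ∀ t ∈ Icc c d, |f' t| ≤ K * |f t|)
    (h0 : f c = 0) : ∀ t ∈ Icc c d, f t = 0 := by
  intro t ht
  have hcont : ContinuousOn f (Icc c d) := fun x hx => (hf x hx).continuousAt.continuousWithinAt
  have key := norm_le_gronwallBound_of_norm_deriv_right_le (f' := f') (δ := 0) (K := K) (ε := 0)
    hcont (fun x hx => (hf x (Ico_subset_Icc_self hx)).hasDerivWithinAt)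
    (by simp [h0]) (fun x hx => by
      simpa [Real.norm_eq_abs] using hb x (Ico_subset_Icc_self hx)) t ht
  rw [gronwallBound_ε0_δ0] at key
  simpa [Real.norm_eq_abs, abs_nonpos_iff] using key

lemma my_zero_bwd (c d K : ℝ) (f f' : ℝ → ℝ)
    (hf : ∀ t ∈ Icc c d, HasDerivAt f (f' t) t)
    (hb : ∀ t ∈ Icc c d, |f' t| ≤ K * |f t|)
    (hd : d ∈ Icc c d) (h0 : f d = 0) : f c = 0 := by
  rcases hd with ⟨hcd, -⟩
  set g : ℝ → ℝ := fun s => f (c + d - s)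
  have hmem : ∀ s ∈ Icc c d, c + d - s ∈ Icc c d := by
    intro s hs; constructor <;> [skip; skip] <;> rcases hs with ⟨h1, h2⟩ <;> linarith
  have hg : ∀ s ∈ Icc c d, HasDerivAt g (-(f' (c + d - s))) s := by
    intro s hs
    have h1 : HasDerivAt (fun s : ℝ => c + d - s) (-1) s := by
      simpa using (hasDerivAt_id s).const_sub (c + d)
    have := (hf _ (hmem s hs)).comp s h1
    rw [mul_neg_one] at this
    exact this
  have := my_zero_fwd c d K g (fun s => -(f' (c + d - s))) hg
    (fun s hs => by simpa [g] using hb _ (hmem s hs)) (by simpa [g] using h0) d ⟨hcd, le_refl d⟩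
  simpa [g] using this

/-- no trade-sign manipulation for the physically delivered linear
contract (μ = r = 0).  With h(t,q) = (θ(t)+b/2)(q-N)²,
∂_q h(t,q) = 2(θ(t)+b/2)(q-N), the optimal speed
v₁*(t,q) = min{C, max{-C, (b(q-N)-∂_q h)/(2l)}} equals
min{C, max{-C, -(θ(t)/l)(q-N)}}; when θ > 0 on [0,T] the unconstrained speed
has the sign of N - q (buy when q < N, sell when q > N), and any solution of
q'(t) = -(θ(t)/l)(q(t)-N) preserves the sign of q(t) - N on [0,T]. -/
theorem stmt_18 (l σ γ α C b N T : ℝ)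
    (hl : 0 < l) (hσ : 0 < σ) (hγ : 0 < γ) (hC : 0 < C) (hT : 0 < T)
    (hb : 0 ≤ b / 2) (hαb : b / 2 < α)
    (a ξ : ℝ) (ha : a = Real.sqrt ((l / 2) * σ ^ 2 * γ))
    (hξ : ξ = (α - b / 2 - a) / (α - b / 2 + a))
    (θ : ℝ → ℝ)
    (hθ : ∀ t, θ t = a * (1 + ξ * Real.exp (-(2 * a / l) * (T - t))) /
      (1 - ξ * Real.exp (-(2 * a / l) * (T - t))))
    (h : ℝ → ℝ → ℝ) (hh : ∀ t q, h t q = (θ t + b / 2) * (q - N) ^ 2) :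
    (∀ t ∈ Set.Icc (0 : ℝ) T, ∀ q : ℝ,
        deriv (fun p => h t p) q = 2 * (θ t + b / 2) * (q - N)) ∧
    (∀ t ∈ Set.Icc (0 : ℝ) T, ∀ q : ℝ,
        min C (max (-C) ((b * (q - N) - deriv (fun p => h t p) q) / (2 * l))) =
          min C (max (-C) (-(θ t / l) * (q - N)))) ∧
    (∀ t ∈ Set.Icc (0 : ℝ) T, ∀ q : ℝ,
        (q < N → 0 < -(θ t / l) * (q - N)) ∧ (N < q → -(θ t / l) * (q - N) < 0)) ∧
    (∀ Q : ℝ → ℝ,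
      (∀ t ∈ Set.Icc (0 : ℝ) T, HasDerivAt Q (-(θ t / l) * (Q t - N)) t) →
        ((N < Q 0 → ∀ t ∈ Set.Icc (0 : ℝ) T, N < Q t) ∧
          (Q 0 < N → ∀ t ∈ Set.Icc (0 : ℝ) T, Q t < N) ∧
          (Q 0 = N → ∀ t ∈ Set.Icc (0 : ℝ) T, Q t = N))) := by
  -- basic positivity facts
  have ha' : 0 < a := by
    rw [ha]; apply Real.sqrt_pos.2; positivity
  have hD : 0 < α - b / 2 + a := by linarith
  have hξabs : |ξ| < 1 := by
    rw [hξ, abs_div, abs_of_pos hD, div_lt_one hD, abs_lt]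
    constructor <;> linarith
  have hθpos : ∀ t ∈ Icc (0 : ℝ) T, 0 < θ t := by
    intro t ht
    set E := Real.exp (-(2 * a / l) * (T - t)) with hE
    have hE1 : E ≤ 1 := by
      rw [hE]
      apply Real.exp_le_one_iff.2
      have h1 : 0 ≤ T - t := by linarith [ht.2]
      have h2 : 0 ≤ 2 * a / l := by positivity
      nlinarith
    have hE0 : 0 < E := Real.exp_pos _
    have habs : |ξ * E| < 1 := by
      rw [abs_mul, abs_of_pos hE0]
      nlinarith [abs_nonneg ξ]
    have h1 : ξ * E < 1 := lt_of_le_of_lt (le_abs_self _) habs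
    have h2 : -1 < ξ * E := by
      have := neg_abs_le (ξ * E); linarith
    rw [hθ t]
    apply div_pos
    · nlinarith
    · linarith
  have hθbd : ∀ t ∈ Icc (0 : ℝ) T, θ t ≤ a * (1 + |ξ|) / (1 - |ξ|) := by
    intro t ht
    set E := Real.exp (-(2 * a / l) * (T - t)) with hE
    have hE1 : E ≤ 1 := by
      rw [hE]
      apply Real.exp_le_one_iff.2
      have h1 : 0 ≤ T - t := by linarith [ht.2]
      have h2 : 0 ≤ 2 * a / l := by positivity
      nlinarith
    have hE0 : 0 < E := Real.exp_pos _
    have hle : ξ * E ≤ |ξ| := by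
      calc ξ * E ≤ |ξ * E| := le_abs_self _
        _ = |ξ| * E := by rw [abs_mul, abs_of_pos hE0]
        _ ≤ |ξ| * 1 := by nlinarith [abs_nonneg ξ]
        _ = |ξ| := mul_one _
    rw [hθ t]
    apply div_le_div₀ (by positivity) (by nlinarith) (by linarith) (by linarith)
  -- part 1
  have part1 : ∀ t ∈ Set.Icc (0 : ℝ) T, ∀ q : ℝ,
      deriv (fun p => h t p) q = 2 * (θ t + b / 2) * (q - N) := by
    intro t _ q
    have hfun : (fun p => h t p) = fun p => (θ t + b / 2) * (p - N) ^ 2 := by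
      funext p; rw [hh]
    rw [hfun]
    have : HasDerivAt (fun p => (θ t + b / 2) * (p - N) ^ 2)
        (2 * (θ t + b / 2) * (q - N)) q := by
      have := (((hasDerivAt_id q).sub_const N).pow 2).const_mul (θ t + b / 2)
      refine this.congr_deriv ?_
      simp only [id_eq]
      push_cast
      ring
    exact this.deriv
  refine ⟨part1, ?_, ?_, ?_⟩
  · -- part 2
    intro t ht q
    rw [part1 t ht q]
    congr 1
    congr 1
    field_simp
    ring
  · -- part 3
    intro t ht q
    have hθl : 0 < θ t / l := div_pos (hθpos t ht) hl
    constructor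
    · intro hq; nlinarith
    · intro hq; nlinarith
  · -- part 4
    intro Q hQ
    set K := a * (1 + |ξ|) / (1 - |ξ|) / l with hK
    set g : ℝ → ℝ := fun t => Q t - N with hg
    have hg' : ∀ t ∈ Icc (0 : ℝ) T, HasDerivAt g (-(θ t / l) * g t) t := by
      intro t ht
      exact (hQ t ht).sub_const N
    have hbnd : ∀ t ∈ Icc (0 : ℝ) T, |(-(θ t / l) * g t)| ≤ K * |g t| := by
      intro t ht
      rw [abs_mul, abs_neg, abs_div, abs_of_pos (hθpos t ht), abs_of_pos hl]
      apply mul_le_mul_of_nonneg_right _ (abs_nonneg _)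
      rw [hK]
      exact div_le_div_of_nonneg_right (hθbd t ht) hl.le
    -- key: if g vanishes anywhere on [0,T], it vanishes at 0
    have hnever : g 0 ≠ 0 → ∀ t ∈ Icc (0 : ℝ) T, g t ≠ 0 := by
      intro h0 t ht hgt
      apply h0
      have hsub : Icc (0 : ℝ) t ⊆ Icc (0 : ℝ) T := Icc_subset_Icc le_rfl ht.2
      exact my_zero_bwd 0 t K g (fun s => -(θ s / l) * g s)
        (fun s hs => hg' s (hsub hs)) (fun s hs => hbnd s (hsub hs))
        ⟨ht.1, le_rfl⟩ hgt
    have hcont : ContinuousOn g (Icc (0 : ℝ) T) :=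
      fun x hx => (hg' x hx).continuousAt.continuousWithinAt
    have hsign : ∀ t ∈ Icc (0 : ℝ) T, 0 < g 0 → 0 < g t := by
      intro t ht h0
      rcases lt_trichotomy (g t) 0 with hlt | heq | hgt
      · exfalso
        have hsub : Icc (0 : ℝ) t ⊆ Icc (0 : ℝ) T := Icc_subset_Icc le_rfl ht.2
        have hcont' : ContinuousOn g (Icc 0 t) := hcont.mono hsub
        have : (0 : ℝ) ∈ Icc (g t) (g 0) := ⟨le_of_lt hlt, le_of_lt h0⟩
        obtain ⟨t₀, ht₀, hgt₀⟩ := intermediate_value_Icc' ht.1 hcont' this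
        exact hnever (ne_of_gt h0) t₀ (hsub ht₀) hgt₀
      · exact absurd heq (hnever (ne_of_gt h0) t ht)
      · exact hgt
    have hsign' : ∀ t ∈ Icc (0 : ℝ) T, g 0 < 0 → g t < 0 := by
      intro t ht h0
      rcases lt_trichotomy (g t) 0 with hlt | heq | hgt
      · exact hlt
      · exact absurd heq (hnever (ne_of_lt h0) t ht)
      · exfalso
        have hsub : Icc (0 : ℝ) t ⊆ Icc (0 : ℝ) T := Icc_subset_Icc le_rfl ht.2
        have hcont' : ContinuousOn g (Icc 0 t) := hcont.mono hsub
        have : (0 : ℝ) ∈ Icc (g 0) (g t) := ⟨le_of_lt h0, le_of_lt hgt⟩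
        obtain ⟨t₀, ht₀, hgt₀⟩ := intermediate_value_Icc ht.1 hcont' this
        exact hnever (ne_of_lt h0) t₀ (hsub ht₀) hgt₀
    refine ⟨fun h0 t ht => ?_, fun h0 t ht => ?_, fun h0 t ht => ?_⟩
    · have := hsign t ht (by simp [hg]; linarith)
      simp [hg] at this; linarith
    · have := hsign' t ht (by simp [hg]; linarith)
      simp [hg] at this; linarith
    · have := my_zero_fwd 0 T K g (fun s => -(θ s / l) * g s) hg' hbnd
        (by simp [hg, h0]) t ht
      simp [hg] at this; linarith
end
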